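/- (One-step error, Theorem 4, path-wise form.) Let α ≥ 0, σ > 0, k > 0, T > 0, r > 0, and let t_m ≤ t_{m+1} ≤ t_m + T. Let w be a continuous function on [t_m, t_{m+1}] with w(t_m) = 0 and |w(t)| ≤ r for all t ∈ [t_m, t_{m+1}]. Let Y be a differentiable function on [t_m, t_{m+1}] with Y(t_m) = y_m ≥ σr, Y(t) > (σ/2)r for all t ∈ [t_m, t_{m+1}], and Y′(t) = α/(Y(t) + (σ/2)w(t)) − (k/2)(Y(t) + (σ/2)w(t)). Let y^m(t) = [y_m² e^{−k(t−t_m)} + (2α/k)(1 − e^{−k(t−t_m)})]^{1/2}. Then |(Y(t_{m+1}) + (σ/2)w(t_{m+1})) − (y^m(t_{m+1}) + (σ/2)w(t_{m+1}))| = |Y(t_{m+1}) − y^m(t_{m+1})| ≤ (D₁ + D₂/y_m²)·r·(t_{m+1} − t_m), where D₁ = σk/2 and D₂ = (4ασ/3)·e^{kT/2}. -/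

import Mathlib

/-!
Both `Y` and the one-step solution `y₀ = y^m` solve `y' = α/y - (k/2) y`, the former along the
shifted path `Y + u`, `u = (σ/2) w`. Hence the error `e = Y - y₀` obeys `e' = -φ (e + u)` with the
positive rate `φ = α/((Y + u) y₀) + k/2`, so `e` is pushed back towards `-u`, and a barrier
argument gives `|e| ≤ σr/2`; this is already the claim when `k (t_{m+1} - t_m) ≥ 1`.

Otherwise `k (t - t_m) ≤ 1` throughout, so `y₀ ≥ y_m e^{-k(t-t_m)/2} > y_m/2`. Where `e + u > 0`,
`φ ≤ k/2 + α e^{k(t-t_m)}/y_m²`; integrating and using `e^x - 1 ≤ (4/3) x e^{x/2}` on `[0, 1]`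
gives the lower bound. Where `e ≥ 0 > e + u`, `Y + u ≥ y₀ - y_m/2` and
`α/((y₀ - y_m/2) y₀) ≤ k/2 + (8α/3) e^{k(t-t_m)/2}/y_m²` bound the growth of `e` from its last
zero, which gives the upper bound.
-/

/-- The explicit solution `y^m(t) = [y_m² e^{−k(t−t_m)} + (2α/k)(1 − e^{−k(t−t_m)})]^{1/2}`
of the ODE `dy/dt = α/y − (k/2)y`, `y(t_m) = y_m`. -/
noncomputable def cirY0 (k α tm ym t : ℝ) : ℝ :=
  Real.sqrt (ym ^ 2 * Real.exp (-(k * (t - tm))) +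
    2 * α / k * (1 - Real.exp (-(k * (t - tm)))))

open Real Set

lemma exp_sub_one_le_of_le_one {x : ℝ} (hx0 : 0 ≤ x) (hx1 : x ≤ 1) :
    exp x - 1 ≤ 4 / 3 * x * exp (x / 2) := by
  have hquad : exp x - 1 - x ≤ x ^ 2 :=
    (le_abs_self _).trans (abs_exp_sub_one_sub_id_le (by rwa [abs_of_nonneg hx0]))
  have hlin : 1 + x / 2 ≤ exp (x / 2) := by linarith [add_one_le_exp (x / 2)]
  nlinarith [mul_le_mul_of_nonneg_left hlin (by positivity : 0 ≤ 4 / 3 * x),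
    mul_nonneg hx0 (sub_nonneg.2 hx1)]

lemma one_third_le_exp_neg {x : ℝ} (hx : x ≤ 1) : 1 / 3 ≤ exp (-x) := by
  have h3 : exp 1 ≤ 3 := exp_one_lt_d9.le.trans (by norm_num)
  calc (1 : ℝ) / 3 ≤ exp (-1) := by
        rw [exp_neg, one_div]
        exact inv_anti₀ (exp_pos 1) h3
    _ ≤ exp (-x) := exp_le_exp.2 (by linarith)

lemma exp_half_sq (x : ℝ) : exp (x / 2) ^ 2 = exp x := by
  rw [← exp_nat_mul, Nat.cast_ofNat, mul_div_cancel₀ _ two_ne_zero]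

lemma le_of_hasDerivWithinAt_nonpos_of_lt {f f' : ℝ → ℝ} {a b c : ℝ}
    (hf : ∀ x ∈ Icc a b, HasDerivWithinAt f (f' x) (Icc a b) x) (ha : f a ≤ c)
    (hf' : ∀ x ∈ Ico a b, c < f x → f' x ≤ 0) : ∀ x ∈ Icc a b, f x ≤ c := by
  intro x hx
  -- Mathlib's fence needs a strict inequality at contact; fence with `c + ε (x - a + 1)`, `ε → 0`.
  have hfence : ∀ ε > 0, f x ≤ c + ε * (x - a + 1) := fun ε hε =>
    image_le_of_deriv_right_lt_deriv_boundary (B := fun y => c + ε * (y - a + 1))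
      (fun y hy => (hf y hy).continuousWithinAt)
      (fun y hy => (hf y (Ico_subset_Icc_self hy)).mono_of_mem_nhdsWithin
        (Icc_mem_nhdsGE_of_mem hy))
      (by simp only [sub_self, zero_add, mul_one]; linarith)
      (fun y => by
        simpa using ((((hasDerivAt_id y).sub_const a).add_const 1).const_mul ε).const_add c)
      (fun y hy hfy => (hf' y hy (by nlinarith [hy.1])).trans_lt hε) hx
  refine le_of_forall_pos_le_add fun δ hδ => ?_
  have hpos : 0 < x - a + 1 := by linarith [hx.1]
  simpa [div_mul_cancel₀ _ hpos.ne'] using hfence (δ / (x - a + 1)) (by positivity)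

lemma div_sub_half_mul_self_le {α k ym c y : ℝ} (hα : 0 ≤ α) (hk : 0 < k) (hym : 0 < ym)
    (hc0 : 0 < c) (hc : 1 / 3 ≤ c ^ 2)
    (hy : y ^ 2 = ym ^ 2 * c ^ 2 + 2 * α / k * (1 - c ^ 2)) (hcy : ym * c ≤ y) :
    α / ((y - ym / 2) * y) ≤ k / 2 + 8 * α / (3 * c * ym ^ 2) := by
  have hc2 : 1 / 2 < c := by nlinarith
  have hy2 : ym / 2 < y := by nlinarith
  rw [div_le_iff₀ (mul_pos (by linarith) (by linarith))]
  set β := 8 * α / (3 * c * ym ^ 2)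
  have hβ : β * (3 * c * ym ^ 2) = 8 * α := div_mul_cancel₀ _ (by positivity)
  have hβ0 : 0 ≤ β := by positivity
  have h8 : 8 * α ≤ 3 * ym * β * y := by nlinarith [mul_le_mul_of_nonneg_left hcy hβ0]
  -- For large `y` the `β` term alone suffices; otherwise `c < 7/8` and `hy` force `2α/k ≤ ym²`.
  rcases le_or_gt (7 / 8 * ym) y with hbig | hsmall
  · have hβy : 3 / 8 * ym * (β * y) ≤ (y - ym / 2) * (β * y) :=
      mul_le_mul_of_nonneg_right (by linarith) (mul_nonneg hβ0 (by linarith))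
    nlinarith [mul_pos hk (mul_pos (by linarith : 0 < y - ym / 2) (by linarith : 0 < y))]
  · set b := 2 * α / k
    have hbk : b * k = 2 * α := div_mul_cancel₀ _ hk.ne'
    have hb : b ≤ ym ^ 2 := by
      have hc' : c ^ 2 < 1 := by nlinarith
      have hyy : y ^ 2 < ym ^ 2 := by nlinarith
      by_contra! hb
      nlinarith [mul_lt_mul_of_pos_right hb (by linarith : 0 < 1 - c ^ 2)]
    have hb' : 2 / 3 * b ≤ y ^ 2 - ym ^ 2 / 3 := by
      nlinarith [mul_le_mul_of_nonneg_right hb (by linarith : (0 : ℝ) ≤ c ^ 2 - 1 / 3)]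
    -- The cubic difference is positive on `y ≥ 0`; its minimum, near `y = 0.65 ym`, is `≈ 0.03 ym³`.
    have hcubic : (y ^ 2 - ym ^ 2 / 3) * (7 * ym - 8 * y) ≤ 2 * ym * y * (y - ym / 2) := by
      nlinarith [mul_nonneg (sq_nonneg (y - 0.65 * ym)) hym.le, pow_pos hym 3]
    have hα' : α * (7 * ym - 8 * y) ≤ 3 / 2 * k * ym * (y - ym / 2) * y := by
      have hαb : α ≤ 3 * k / 4 * (y ^ 2 - ym ^ 2 / 3) := by nlinarith
      calc α * (7 * ym - 8 * y) ≤ 3 * k / 4 * (y ^ 2 - ym ^ 2 / 3) * (7 * ym - 8 * y) :=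
            mul_le_mul_of_nonneg_right hαb (by linarith)
        _ ≤ 3 * k / 4 * (2 * ym * y * (y - ym / 2)) := by
            rw [mul_assoc]; exact mul_le_mul_of_nonneg_left hcubic (by positivity)
        _ = 3 / 2 * k * ym * (y - ym / 2) * y := by ring
    refine le_of_mul_le_mul_left ?_ (by positivity : (0 : ℝ) < 3 * ym)
    nlinarith [mul_le_mul_of_nonneg_right h8 (by linarith : (0 : ℝ) ≤ y - ym / 2)]

section cirY0

variable {k α tm ym t : ℝ}

lemma cirY0_drift_nonneg (hα : 0 ≤ α) (hk : 0 < k) (ht : tm ≤ t) :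
    0 ≤ 2 * α / k * (1 - exp (-(k * (t - tm)))) :=
  mul_nonneg (by positivity)
    (sub_nonneg.2 (exp_le_one_iff.2 (neg_nonpos.2 (mul_nonneg hk.le (sub_nonneg.2 ht)))))

lemma sq_cirY0 (hα : 0 ≤ α) (hk : 0 < k) (ht : tm ≤ t) :
    cirY0 k α tm ym t ^ 2 =
      ym ^ 2 * exp (-(k * (t - tm))) + 2 * α / k * (1 - exp (-(k * (t - tm)))) :=
  sq_sqrt (add_nonneg (by positivity) (cirY0_drift_nonneg hα hk ht))

lemma sq_mul_exp_le_sq_cirY0 (hα : 0 ≤ α) (hk : 0 < k) (ht : tm ≤ t) :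
    ym ^ 2 * exp (-(k * (t - tm))) ≤ cirY0 k α tm ym t ^ 2 :=
  (sq_cirY0 hα hk ht).symm ▸ le_add_of_nonneg_right (cirY0_drift_nonneg hα hk ht)

lemma mul_exp_le_cirY0 (hα : 0 ≤ α) (hk : 0 < k) (ht : tm ≤ t) :
    ym * exp (-(k * (t - tm)) / 2) ≤ cirY0 k α tm ym t := by
  refine le_sqrt_of_sq_le ?_
  rw [mul_pow, exp_half_sq]
  exact le_add_of_nonneg_right (cirY0_drift_nonneg hα hk ht)

lemma cirY0_pos (hα : 0 ≤ α) (hk : 0 < k) (hym : 0 < ym) (ht : tm ≤ t) :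
    0 < cirY0 k α tm ym t :=
  (by positivity : 0 < ym * exp (-(k * (t - tm)) / 2)).trans_le (mul_exp_le_cirY0 hα hk ht)

lemma cirY0_self (hym : 0 ≤ ym) : cirY0 k α tm ym tm = ym := by
  simp [cirY0, sqrt_sq hym]

lemma hasDerivAt_cirY0 (hα : 0 ≤ α) (hk : 0 < k) (hym : 0 < ym) (ht : tm ≤ t) :
    HasDerivAt (cirY0 k α tm ym) (α / cirY0 k α tm ym t - k / 2 * cirY0 k α tm ym t) t := by
  have hexp : HasDerivAt (fun s => exp (-(k * (s - tm)))) (exp (-(k * (t - tm))) * -k) t := by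
    simpa using (((hasDerivAt_id t).sub_const tm).const_mul k).neg.exp
  have hrad : HasDerivAt
      (fun s => ym ^ 2 * exp (-(k * (s - tm))) + 2 * α / k * (1 - exp (-(k * (s - tm)))))
      (ym ^ 2 * (exp (-(k * (t - tm))) * -k) + 2 * α / k * -(exp (-(k * (t - tm))) * -k)) t :=
    (hexp.const_mul _).add ((hexp.const_sub 1).const_mul _)
  have hy := cirY0_pos hα hk hym ht
  have hsq := sq_cirY0 (ym := ym) hα hk ht
  convert hrad.sqrt (hsq ▸ pow_pos hy 2).ne' using 1
  · rfl
  change _ = _ / (2 * cirY0 k α tm ym t)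
  have := hk.ne'
  field_simp
  linear_combination (norm := (field_simp; ring)) (-k) * hsq

lemma half_lt_cirY0 (hα : 0 ≤ α) (hk : 0 < k) (hym : 0 < ym) (ht : tm ≤ t)
    (hkt : k * (t - tm) ≤ 1) : ym / 2 < cirY0 k α tm ym t := by
  have hc : 1 / 2 < exp (-(k * (t - tm)) / 2) := by
    nlinarith [exp_half_sq (-(k * (t - tm))), one_third_le_exp_neg hkt,
      exp_pos (-(k * (t - tm)) / 2)]
  nlinarith [mul_exp_le_cirY0 (ym := ym) hα hk ht]

lemma div_cirY0_sub_half_mul_le (hα : 0 ≤ α) (hk : 0 < k) (hym : 0 < ym) (ht : tm ≤ t)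
    (hkt : k * (t - tm) ≤ 1) :
    α / ((cirY0 k α tm ym t - ym / 2) * cirY0 k α tm ym t) ≤
      k / 2 + 8 * α * exp (k * (t - tm) / 2) / (3 * ym ^ 2) := by
  have hc := exp_half_sq (-(k * (t - tm)))
  convert div_sub_half_mul_self_le hα hk hym (exp_pos _) (hc ▸ one_third_le_exp_neg hkt)
    (by rw [hc]; exact sq_cirY0 hα hk ht) (mul_exp_le_cirY0 hα hk ht) using 2
  rw [neg_div, exp_neg]
  field_simp

end cirY0

lemma ode_rhs_sub_ode_rhs {α k z y : ℝ} (hz : z ≠ 0) (hy : y ≠ 0) :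
    (α / z - k / 2 * z) - (α / y - k / 2 * y) = -((α / (z * y) + k / 2) * (z - y)) := by
  field_simp
  ring

/-- `Y` is the paper's `Y` on `[tm, tm1]` when `u = (σ/2) w`: `Y + u` is the square root of the
CIR path there. -/
structure IsShiftedCIRSolution (α k tm tm1 : ℝ) (Y u : ℝ → ℝ) : Prop where
  pos : ∀ t ∈ Icc tm tm1, 0 < Y t + u t
  hasDerivWithinAt : ∀ t ∈ Icc tm tm1,
    HasDerivWithinAt Y (α / (Y t + u t) - k / 2 * (Y t + u t)) (Icc tm tm1) t

namespace IsShiftedCIRSolution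

variable {α k tm tm1 ym ρ : ℝ} {Y u : ℝ → ℝ}

local notation "y₀" => cirY0 k α tm ym

lemma hasDerivWithinAt_sub_cirY0 (hY : IsShiftedCIRSolution α k tm tm1 Y u) (hα : 0 ≤ α)
    (hk : 0 < k) (hym : 0 < ym) :
    ∀ t ∈ Icc tm tm1, HasDerivWithinAt (fun s => Y s - y₀ s)
      (-((α / ((Y t + u t) * y₀ t) + k / 2) * (Y t + u t - y₀ t))) (Icc tm tm1) t := by
  intro t ht
  have hy := cirY0_pos hα hk hym ht.1
  rw [← ode_rhs_sub_ode_rhs (hY.pos t ht).ne' hy.ne']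
  exact (hY.hasDerivWithinAt t ht).sub (hasDerivAt_cirY0 hα hk hym ht.1).hasDerivWithinAt

lemma rate_pos (hY : IsShiftedCIRSolution α k tm tm1 Y u) (hα : 0 ≤ α) (hk : 0 < k)
    (hym : 0 < ym) {t : ℝ} (ht : t ∈ Icc tm tm1) : 0 < α / ((Y t + u t) * y₀ t) + k / 2 := by
  have := hY.pos t ht
  have := cirY0_pos hα hk hym ht.1
  positivity

lemma abs_sub_cirY0_le (hY : IsShiftedCIRSolution α k tm tm1 Y u) (hα : 0 ≤ α) (hk : 0 < k)
    (hym : 0 < ym) (hinit : Y tm = ym) (hu : ∀ t ∈ Icc tm tm1, |u t| ≤ ρ) :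
    ∀ t ∈ Icc tm tm1, |Y t - y₀ t| ≤ ρ := by
  intro t ht
  have hρ : 0 ≤ ρ := (abs_nonneg _).trans (hu tm (left_mem_Icc.2 (ht.1.trans ht.2)))
  have he₀ : Y tm - y₀ tm = 0 := by rw [hinit, cirY0_self hym.le, sub_self]
  have hderiv := hY.hasDerivWithinAt_sub_cirY0 hα hk hym
  rw [abs_le, neg_le]
  constructor
  · refine le_of_hasDerivWithinAt_nonpos_of_lt (f := fun s => -(Y s - y₀ s))
      (fun s hs => (hderiv s hs).neg)
      (by rw [he₀, neg_zero]; exact hρ) (fun s hs hlt => ?_) t ht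
    have hs' := Ico_subset_Icc_self hs
    have hneg : Y s + u s - y₀ s < 0 := by linarith [le_abs_self (u s), hu s hs']
    nlinarith [hY.rate_pos hα hk hym hs']
  · refine le_of_hasDerivWithinAt_nonpos_of_lt hderiv (by rw [he₀]; exact hρ)
      (fun s hs hlt => ?_) t ht
    have hs' := Ico_subset_Icc_self hs
    have hpos : 0 < Y s + u s - y₀ s := by linarith [neg_abs_le (u s), hu s hs']
    nlinarith [hY.rate_pos hα hk hym hs']

lemma neg_le_sub_cirY0 (hY : IsShiftedCIRSolution α k tm tm1 Y u) (hα : 0 ≤ α) (hk : 0 < k)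
    (hym : 0 < ym) (hinit : Y tm = ym) (hu : ∀ t ∈ Icc tm tm1, |u t| ≤ ρ) :
    ∀ t ∈ Icc tm tm1,
      -(ρ * (k * (t - tm) + 2 * α / (k * ym ^ 2) * (exp (k * (t - tm)) - 1))) ≤ Y t - y₀ t := by
  intro t ht
  have hρ : 0 ≤ ρ := (abs_nonneg _).trans (hu tm (left_mem_Icc.2 (ht.1.trans ht.2)))
  have he₀ : Y tm - y₀ tm = 0 := by rw [hinit, cirY0_self hym.le, sub_self]
  have he := hY.abs_sub_cirY0_le hα hk hym hinit hu
  have hM : ∀ s, HasDerivAt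
      (fun s => -(ρ * (k * (s - tm) + 2 * α / (k * ym ^ 2) * (exp (k * (s - tm)) - 1))))
      (-(ρ * (k + 2 * α / ym ^ 2 * exp (k * (s - tm))))) s := by
    intro s
    have hlin : HasDerivAt (fun s => k * (s - tm)) k s := by
      simpa using ((hasDerivAt_id s).sub_const tm).const_mul k
    refine (((hlin.add ((hlin.exp.sub_const 1).const_mul (2 * α / (k * ym ^ 2)))).const_mul
      ρ).neg).congr_deriv ?_
    field_simp
  have hcmp := le_of_hasDerivWithinAt_nonpos_of_lt (c := 0)
    (f := fun s => -(ρ * (k * (s - tm) + 2 * α / (k * ym ^ 2) * (exp (k * (s - tm)) - 1))) -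
      (Y s - y₀ s))
    (fun s hs => (hM s).hasDerivWithinAt.sub (hY.hasDerivWithinAt_sub_cirY0 hα hk hym s hs))
    (by simp [he₀]) (fun s hs _ => ?_) t ht
  · linarith
  have hs' := Ico_subset_Icc_self hs
  have hy := cirY0_pos hα hk hym hs'.1
  rcases le_or_gt (Y s + u s - y₀ s) 0 with hle | hlt
  · have : 0 ≤ ρ * (k + 2 * α / ym ^ 2 * exp (k * (s - tm))) := by positivity
    nlinarith [hY.rate_pos hα hk hym hs']
  have hrate : α / ((Y s + u s) * y₀ s) ≤ α / ym ^ 2 * exp (k * (s - tm)) :=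
    calc α / ((Y s + u s) * y₀ s) ≤ α / (ym ^ 2 * exp (-(k * (s - tm)))) :=
          div_le_div_of_nonneg_left hα (by positivity)
            ((sq_mul_exp_le_sq_cirY0 hα hk hs'.1).trans (by nlinarith))
      _ = α / ym ^ 2 * exp (k * (s - tm)) := by rw [exp_neg]; field_simp
  have hgap : Y s + u s - y₀ s ≤ 2 * ρ := by
    linarith [(abs_le.1 (he s hs')).2, le_abs_self (u s), hu s hs']
  linear_combination mul_le_mul (add_le_add_right hrate (k / 2)) hgap hlt.le (by positivity)

lemma sub_cirY0_le (hY : IsShiftedCIRSolution α k tm tm1 Y u) (hα : 0 ≤ α) (hk : 0 < k)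
    (hym : 0 < ym) (hinit : Y tm = ym) (hu : ∀ t ∈ Icc tm tm1, |u t| ≤ ρ) (hρ : ρ ≤ ym / 2)
    (hkt : k * (tm1 - tm) ≤ 1) {T : ℝ} (hT : tm1 - tm ≤ T) :
    ∀ t ∈ Icc tm tm1,
      Y t - y₀ t ≤ ρ * (k + 8 * α * exp (k * T / 2) / (3 * ym ^ 2)) * (t - tm) := by
  intro t ht
  have hρ0 : 0 ≤ ρ := (abs_nonneg _).trans (hu tm (left_mem_Icc.2 (ht.1.trans ht.2)))
  have he₀ : Y tm - y₀ tm = 0 := by rw [hinit, cirY0_self hym.le, sub_self]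
  set K := k + 8 * α * exp (k * T / 2) / (3 * ym ^ 2)
  have hK : 0 ≤ K := by positivity
  have hcmp := le_of_hasDerivWithinAt_nonpos_of_lt (c := 0)
    (f := fun s => Y s - y₀ s - ρ * K * (s - tm))
    (fun s hs => (hY.hasDerivWithinAt_sub_cirY0 hα hk hym s hs).sub
      ((((hasDerivAt_id s).sub_const tm).const_mul (ρ * K)).hasDerivWithinAt))
    (by simp [he₀]) (fun s hs hlt => ?_) t ht
  · linarith
  have hs' := Ico_subset_Icc_self hs
  have hy := cirY0_pos hα hk hym hs'.1
  have he : 0 < Y s - y₀ s := by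
    nlinarith [mul_nonneg (mul_nonneg hρ0 hK) (sub_nonneg.2 hs'.1)]
  rcases le_or_gt 0 (Y s + u s - y₀ s) with hge | hlt'
  · nlinarith [hY.rate_pos hα hk hym hs', mul_nonneg hρ0 hK]
  have hks : k * (s - tm) ≤ 1 := by nlinarith [hs'.2]
  have hhalf := half_lt_cirY0 hα hk hym hs'.1 hks
  have hz : y₀ s - ym / 2 ≤ Y s + u s := by linarith [neg_abs_le (u s), hu s hs']
  have hrate : α / ((Y s + u s) * y₀ s) + k / 2 ≤ K :=
    calc α / ((Y s + u s) * y₀ s) + k / 2 ≤ α / ((y₀ s - ym / 2) * y₀ s) + k / 2 := by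
          linarith [div_le_div_of_nonneg_left hα (mul_pos (by linarith) hy)
            (mul_le_mul_of_nonneg_right hz hy.le)]
      _ ≤ k / 2 + 8 * α * exp (k * (s - tm) / 2) / (3 * ym ^ 2) + k / 2 := by
          gcongr; exact div_cirY0_sub_half_mul_le hα hk hym hs'.1 hks
      _ = k + 8 * α * exp (k * (s - tm) / 2) / (3 * ym ^ 2) := by ring
      _ ≤ K := by
          simp only [K]
          gcongr
          linarith [hs'.2]
  have hgap : y₀ s - (Y s + u s) ≤ ρ := by linarith [neg_abs_le (u s), hu s hs']
  nlinarith [mul_le_mul hrate hgap (by linarith) hK]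

lemma abs_sub_cirY0_le_mul (hY : IsShiftedCIRSolution α k tm tm1 Y u) (hα : 0 ≤ α)
    (hk : 0 < k) (hym : 0 < ym) (hinit : Y tm = ym) (hu : ∀ t ∈ Icc tm tm1, |u t| ≤ ρ)
    (hρ : ρ ≤ ym / 2) (htm : tm ≤ tm1) {T : ℝ} (hT : tm1 - tm ≤ T) :
    |Y tm1 - y₀ tm1| ≤ ρ * (k + 8 * α * exp (k * T / 2) / (3 * ym ^ 2)) * (tm1 - tm) := by
  have htm1 : tm1 ∈ Icc tm tm1 := right_mem_Icc.2 htm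
  have hρ0 : 0 ≤ ρ := (abs_nonneg _).trans (hu tm (left_mem_Icc.2 htm))
  have hK : ρ * k * (tm1 - tm) ≤ ρ * (k + 8 * α * exp (k * T / 2) / (3 * ym ^ 2)) * (tm1 - tm) := by
    gcongr
    exact le_add_of_nonneg_right (by positivity)
  rcases le_or_gt 1 (k * (tm1 - tm)) with hbig | hsmall
  · nlinarith [hY.abs_sub_cirY0_le hα hk hym hinit hu tm1 htm1]
  refine abs_le.2 ⟨?_, hY.sub_cirY0_le hα hk hym hinit hu hρ hsmall.le hT tm1 htm1⟩
  have hexp : exp (k * (tm1 - tm)) - 1 ≤ 4 / 3 * (k * (tm1 - tm)) * exp (k * T / 2) :=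
    (exp_sub_one_le_of_le_one (by nlinarith) hsmall.le).trans (by gcongr)
  have hlow := hY.neg_le_sub_cirY0 hα hk hym hinit hu tm1 htm1
  have : 2 * α / (k * ym ^ 2) * (exp (k * (tm1 - tm)) - 1) ≤
      8 * α * exp (k * T / 2) / (3 * ym ^ 2) * (tm1 - tm) := by
    calc _ ≤ 2 * α / (k * ym ^ 2) * (4 / 3 * (k * (tm1 - tm)) * exp (k * T / 2)) := by gcongr
      _ = _ := by field_simp; ring
  nlinarith [mul_le_mul_of_nonneg_left this hρ0]

end IsShiftedCIRSolution

theorem stmt_12_general (α σ k T r tm tm1 ym : ℝ) (hα : 0 ≤ α) (hσ : 0 < σ) (hk : 0 < k)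
    (hr : 0 < r) (htm : tm ≤ tm1) (htm1 : tm1 ≤ tm + T)
    (w : ℝ → ℝ)
    (hwr : ∀ t ∈ Set.Icc tm tm1, |w t| ≤ r)
    (Y : ℝ → ℝ) (hinit : Y tm = ym) (hym : σ * r ≤ ym)
    (hpos : ∀ t ∈ Set.Icc tm tm1, σ / 2 * r < Y t)
    (hder : ∀ t ∈ Set.Icc tm tm1, HasDerivWithinAt Y
      (α / (Y t + σ / 2 * w t) - k / 2 * (Y t + σ / 2 * w t)) (Set.Icc tm tm1) t) :
    let D₁ : ℝ := σ * k / 2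
    let D₂ : ℝ := 4 * α * σ / 3 * Real.exp (k * T / 2)
    |(Y tm1 + σ / 2 * w tm1) - (cirY0 k α tm ym tm1 + σ / 2 * w tm1)| =
      |Y tm1 - cirY0 k α tm ym tm1| ∧
    |Y tm1 - cirY0 k α tm ym tm1| ≤ (D₁ + D₂ / ym ^ 2) * r * (tm1 - tm) := by
  intro D₁ D₂
  refine ⟨by rw [add_sub_add_right_eq_sub], ?_⟩
  have hu : ∀ t ∈ Icc tm tm1, |σ / 2 * w t| ≤ σ * r / 2 := fun t ht => by
    rw [abs_mul, abs_of_pos (half_pos hσ)]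
    nlinarith [hwr t ht]
  have hY : IsShiftedCIRSolution α k tm tm1 Y (fun t => σ / 2 * w t) :=
    ⟨fun t ht => by linarith [neg_abs_le (σ / 2 * w t), hu t ht, hpos t ht], hder⟩
  have hym0 : 0 < ym := (mul_pos hσ hr).trans_le hym
  convert hY.abs_sub_cirY0_le_mul hα hk hym0 hinit hu (by linarith) htm (T := T) (by linarith)
    using 1
  simp only [D₁, D₂]
  field_simp
  ring

theorem stmt_12 (α σ k T r tm tm1 ym : ℝ) (hα : 0 ≤ α) (hσ : 0 < σ) (hk : 0 < k)
    (hT : 0 < T) (hr : 0 < r) (htm : tm ≤ tm1) (htm1 : tm1 ≤ tm + T)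
    (w : ℝ → ℝ) (hw : ContinuousOn w (Set.Icc tm tm1)) (hw0 : w tm = 0)
    (hwr : ∀ t ∈ Set.Icc tm tm1, |w t| ≤ r)
    (Y : ℝ → ℝ) (hinit : Y tm = ym) (hym : σ * r ≤ ym)
    (hpos : ∀ t ∈ Set.Icc tm tm1, σ / 2 * r < Y t)
    (hder : ∀ t ∈ Set.Icc tm tm1, HasDerivWithinAt Y
      (α / (Y t + σ / 2 * w t) - k / 2 * (Y t + σ / 2 * w t)) (Set.Icc tm tm1) t) :
    let D₁ : ℝ := σ * k / 2
    let D₂ : ℝ := 4 * α * σ / 3 * Real.exp (k * T / 2)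
    |(Y tm1 + σ / 2 * w tm1) - (cirY0 k α tm ym tm1 + σ / 2 * w tm1)| =
      |Y tm1 - cirY0 k α tm ym tm1| ∧
    |Y tm1 - cirY0 k α tm ym tm1| ≤ (D₁ + D₂ / ym ^ 2) * r * (tm1 - tm) :=
  stmt_12_general α σ k T r tm tm1 ym hα hσ hk hr htm htm1 w hwr Y hinit hym hpos hder
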